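/- Let A be an n×n real SPSD matrix with eigenvalues λ₁ ≥ … ≥ λₙ ≥ 0, let Q ∈ ℝ^{n×ℓ} have orthonormal columns, let 1 ≤ k ≤ ℓ, and let ε₁, …, ε_k ≥ 0. Suppose that λᵢ − εᵢ ≤ σᵢ(QᵀA) ≤ λᵢ for i = 1, …, k, where σᵢ(QᵀA) denotes the i-th largest singular value of QᵀA. Let Â := A^{1/2} P A^{1/2} be the Nyström approximation of A with respect to Q, where P is the orthogonal projection onto the column space of A^{1/2}Q, and let λ̂ᵢ denote the i-th largest eigenvalue of Â. Then λᵢ − εᵢ ≤ λ̂ᵢ ≤ λᵢ for i = 1, …, k. -/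

import Mathlib

open Matrix BigOperators

/-- `M = U * diagonal μ * Uᵀ` is a spectral (eigen)decomposition of the symmetric matrix `M`,
with orthogonal `U` and eigenvalues `μ` listed in nonincreasing order. -/
def IsSpectralDecomp {n : ℕ} (M U : Matrix (Fin n) (Fin n) ℝ) (μ : Fin n → ℝ) : Prop :=
  Uᵀ * U = 1 ∧ Antitone μ ∧ M = U * Matrix.diagonal μ * Uᵀ

/-- Truncation of a spectral decomposition to its `k` largest (first `k`) eigenvalues:
the best rank-`k` approximation `M_(k)` associated with the decomposition `(U, μ)`. -/
noncomputable def trunc {n : ℕ} (k : ℕ) (U : Matrix (Fin n) (Fin n) ℝ) (μ : Fin n → ℝ) :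
    Matrix (Fin n) (Fin n) ℝ :=
  U * Matrix.diagonal (fun i : Fin n => if (i : ℕ) < k then μ i else 0) * Uᵀ

/-- `f` is operator monotone on SPSD matrices: for all `m` and all `m × m` SPSD matrices
`B ⪰ C ⪰ 0`, one has `f(B) ⪰ f(C)`, where matrix functions are computed through (any)
spectral decomposition. -/
def OperatorMonotone (f : ℝ → ℝ) : Prop :=
  ∀ (m : ℕ) (B C U V : Matrix (Fin m) (Fin m) ℝ) (β γ : Fin m → ℝ),
    IsSpectralDecomp B U β → IsSpectralDecomp C V γ →
    B.PosSemidef → C.PosSemidef → (B - C).PosSemidef →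
    (U * Matrix.diagonal (f ∘ β) * Uᵀ - V * Matrix.diagonal (f ∘ γ) * Vᵀ).PosSemidef

/-- Squared Frobenius norm `‖M‖_F² = Σ_{i,j} M_{ij}²`. -/
noncomputable def frobSq {m l : ℕ} (M : Matrix (Fin m) (Fin l) ℝ) : ℝ :=
  ∑ i, ∑ j, (M i j) ^ 2

/-- Frobenius norm. -/
noncomputable def frobNorm {m l : ℕ} (M : Matrix (Fin m) (Fin l) ℝ) : ℝ :=
  Real.sqrt (frobSq M)

/-- The eigenvalues of a Hermitian matrix listed in nonincreasing order:
`eigsDesc hM i` is the `(i+1)`-st largest eigenvalue of `M`. -/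
noncomputable def eigsDesc {m : ℕ} {M : Matrix (Fin m) (Fin m) ℝ} (hM : M.IsHermitian) :
    Fin m → ℝ :=
  fun i => (hM.eigenvalues ∘ Tuple.sort hM.eigenvalues) i.rev

/-- The singular values of `M` in nonincreasing order: `svDesc M i` is the `(i+1)`-st largest
singular value of `M`, i.e. the square root of the `(i+1)`-st largest eigenvalue of `MᴴM`. -/
noncomputable def svDesc {m l : ℕ} (M : Matrix (Fin m) (Fin l) ℝ) : Fin l → ℝ :=
  fun i => Real.sqrt (eigsDesc (Matrix.isHermitian_conjTranspose_mul_self M) i)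

/-- Nuclear norm: the sum of the singular values. -/
noncomputable def nuclearNorm {m l : ℕ} (M : Matrix (Fin m) (Fin l) ℝ) : ℝ :=
  ∑ i, svDesc M i

/-- Operator (spectral) norm: the largest singular value. -/
noncomputable def opNorm {m l : ℕ} (M : Matrix (Fin m) (Fin l) ℝ) : ℝ :=
  ⨆ i, svDesc M i

/-- `p`-th power of the Schatten `p`-norm: `‖M‖_(p)^p = Σᵢ σᵢ(M)^p`. -/
noncomputable def schattenPow {m l : ℕ} (p : ℝ) (M : Matrix (Fin m) (Fin l) ℝ) : ℝ :=
  ∑ i, svDesc M i ^ p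

/-- Schatten `p`-norm: `‖M‖_(p) = (Σᵢ σᵢ(M)^p)^(1/p)`. -/
noncomputable def schattenNorm {m l : ℕ} (p : ℝ) (M : Matrix (Fin m) (Fin l) ℝ) : ℝ :=
  (schattenPow p M) ^ (1 / p)

/-- `P` is the orthogonal projection onto the column space of `M`. -/
def IsOrthProjOnto {m l : ℕ} (P : Matrix (Fin m) (Fin m) ℝ) (M : Matrix (Fin m) (Fin l) ℝ) :
    Prop :=
  Pᵀ = P ∧ P * P = P ∧ P * M = M ∧ ∃ Y : Matrix (Fin l) (Fin m) ℝ, P = M * Y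

/-- The square root of a positive semidefinite matrix, as `Matrix.PosSemidef.sqrt` was defined
in Mathlib of December 2024 (removed since). -/
noncomputable def Matrix.PosSemidef.sqrt {ι : Type*} [Fintype ι] [DecidableEq ι]
    {A : Matrix ι ι ℝ} (hA : A.PosSemidef) : Matrix ι ι ℝ :=
  hA.1.eigenvectorUnitary.1 * diagonal ((↑) ∘ (Real.sqrt ∘ hA.1.eigenvalues)) *
    (star hA.1.eigenvectorUnitary : Matrix ι ι ℝ)

/-!
Write `S = A^{1/2}`, so that `Â = S P S`. Since `P` is an orthogonal projection,
`xᵀ Â x = ‖P S x‖² ≤ ‖S x‖² = xᵀ A x`, hence `0 ⪯ Â ⪯ A` and Weyl's monotonicity principle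
(proved by the Courant–Fischer dimension count) gives `0 ≤ λ̂ᵢ ≤ λᵢ`. For the lower bound, `P`
fixes the columns of `S Q`, so `Qᵀ S P = Qᵀ S` and therefore `Qᵀ Â = Qᵀ A`. As `Qᵀ` is a
contraction, `‖Qᵀ A x‖ = ‖Qᵀ Â x‖ ≤ ‖Â x‖`, i.e. `(QᵀA)ᵀ(QᵀA) ⪯ Â²`, and monotonicity once more
gives `σᵢ(QᵀA) ≤ λ̂ᵢ`.
-/

namespace Matrix

variable {m n : Type*} [Fintype m] [Fintype n]

section CommSemiring

variable {R : Type*} [CommSemiring R]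

lemma dotProduct_transpose_mul_mulVec (B : Matrix m n R) (x : n → R) :
    x ⬝ᵥ (Bᵀ * B) *ᵥ x = (B *ᵥ x) ⬝ᵥ (B *ᵥ x) := by
  rw [← mulVec_mulVec, dotProduct_transpose_mulVec]

lemma dotProduct_mul_mul_transpose_mulVec (B : Matrix m n R) (C : Matrix n n R) (x : m → R) :
    x ⬝ᵥ (B * C * Bᵀ) *ᵥ x = (Bᵀ *ᵥ x) ⬝ᵥ C *ᵥ (Bᵀ *ᵥ x) := by
  rw [← mulVec_mulVec, ← mulVec_mulVec, dotProduct_mulVec, ← mulVec_transpose]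

lemma dotProduct_mul_mul_mulVec_eq {S P : Matrix n n R} (hS : S.IsSymm) (x : n → R) :
    x ⬝ᵥ (S * P * S) *ᵥ x = (S *ᵥ x) ⬝ᵥ P *ᵥ (S *ᵥ x) := by
  have hSPS : S * P * S = S * P * Sᵀ := by rw [hS.eq]
  rw [hSPS, dotProduct_mul_mul_transpose_mulVec, hS.eq]

end CommSemiring

lemma dotProduct_mulVec_eq_mulVec_dotProduct_mulVec {P : Matrix n n ℝ} (hsymm : P.IsSymm)
    (hidem : IsIdempotentElem P) (w : n → ℝ) : w ⬝ᵥ P *ᵥ w = (P *ᵥ w) ⬝ᵥ (P *ᵥ w) := by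
  calc w ⬝ᵥ P *ᵥ w = w ⬝ᵥ (Pᵀ * P) *ᵥ w := by rw [hsymm.eq, hidem.eq]
    _ = (P *ᵥ w) ⬝ᵥ (P *ᵥ w) := dotProduct_transpose_mul_mulVec P w

lemma dotProduct_mulVec_le_dotProduct_self {P : Matrix n n ℝ} (hsymm : P.IsSymm)
    (hidem : IsIdempotentElem P) (w : n → ℝ) : w ⬝ᵥ P *ᵥ w ≤ w ⬝ᵥ w := by
  have hPw := dotProduct_mulVec_eq_mulVec_dotProduct_mulVec hsymm hidem w
  have hcomm : (P *ᵥ w) ⬝ᵥ w = w ⬝ᵥ P *ᵥ w := dotProduct_comm _ _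
  have hsplit : (w - P *ᵥ w) ⬝ᵥ (w - P *ᵥ w) = w ⬝ᵥ w - w ⬝ᵥ P *ᵥ w := by
    rw [sub_dotProduct, dotProduct_sub, dotProduct_sub, hcomm, ← hPw]; ring
  have hnonneg : 0 ≤ (w - P *ᵥ w) ⬝ᵥ (w - P *ᵥ w) :=
    Finset.sum_nonneg fun i _ => mul_self_nonneg _
  linarith

lemma transpose_mulVec_dotProduct_self_le [DecidableEq m] {Q : Matrix n m ℝ} (hQ : Qᵀ * Q = 1)
    (y : n → ℝ) : (Qᵀ *ᵥ y) ⬝ᵥ (Qᵀ *ᵥ y) ≤ y ⬝ᵥ y := by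
  have hsymm : (Q * Qᵀ).IsSymm := by simp [IsSymm, transpose_mul]
  have hidem : IsIdempotentElem (Q * Qᵀ) := by
    rw [IsIdempotentElem, ← Matrix.mul_assoc, Matrix.mul_assoc Q, hQ, Matrix.mul_one]
  calc (Qᵀ *ᵥ y) ⬝ᵥ (Qᵀ *ᵥ y) = y ⬝ᵥ (Q * Qᵀ) *ᵥ y := by
        rw [← dotProduct_transpose_mul_mulVec, transpose_transpose]
    _ ≤ y ⬝ᵥ y := dotProduct_mulVec_le_dotProduct_self hsymm hidem y

lemma dotProduct_mul_mul_mulVec_nonneg {S P : Matrix n n ℝ} (hS : S.IsSymm) (hPs : P.IsSymm)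
    (hPi : IsIdempotentElem P) (x : n → ℝ) : 0 ≤ x ⬝ᵥ (S * P * S) *ᵥ x := by
  rw [dotProduct_mul_mul_mulVec_eq hS, dotProduct_mulVec_eq_mulVec_dotProduct_mulVec hPs hPi]
  exact Finset.sum_nonneg fun i _ => mul_self_nonneg _

lemma dotProduct_mul_mul_mulVec_le {S P : Matrix n n ℝ} (hS : S.IsSymm) (hPs : P.IsSymm)
    (hPi : IsIdempotentElem P) (x : n → ℝ) : x ⬝ᵥ (S * P * S) *ᵥ x ≤ x ⬝ᵥ (S * S) *ᵥ x :=
  calc x ⬝ᵥ (S * P * S) *ᵥ x = (S *ᵥ x) ⬝ᵥ P *ᵥ (S *ᵥ x) := dotProduct_mul_mul_mulVec_eq hS x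
    _ ≤ (S *ᵥ x) ⬝ᵥ (S *ᵥ x) := dotProduct_mulVec_le_dotProduct_self hPs hPi _
    _ = x ⬝ᵥ (S * S) *ᵥ x := by rw [← dotProduct_transpose_mul_mulVec, hS.eq]

end Matrix

lemma IsOrthProjOnto.transpose_mul_mul_mul_eq {m l : ℕ} {S P : Matrix (Fin m) (Fin m) ℝ}
    {Q : Matrix (Fin m) (Fin l) ℝ} (hS : S.IsSymm) (hP : IsOrthProjOnto P (S * Q)) :
    Qᵀ * (S * P * S) = Qᵀ * (S * S) := by
  have hQSP : Qᵀ * S * P = Qᵀ * S := by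
    rw [← hS.eq, ← transpose_mul, ← hP.1, ← transpose_mul, hP.2.2.1]
  rw [← Matrix.mul_assoc, ← Matrix.mul_assoc, hQSP, Matrix.mul_assoc]

lemma exists_ne_zero_forall_mulVec_apply_eq_zero {K : Type*} [Field K] {n : ℕ}
    (B C : Matrix (Fin n) (Fin n) K) (i : Fin n) :
    ∃ x ≠ 0, (∀ j, i < j → (B *ᵥ x) j = 0) ∧ ∀ j, j < i → (C *ᵥ x) j = 0 := by
  let R : Matrix {j // j ≠ i} (Fin n) K := of fun j => if (j : Fin n) < i then C j else B j
  have hrank : Module.finrank K ({j // j ≠ i} → K) < Module.finrank K (Fin n → K) := by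
    simp only [Module.finrank_fintype_fun_eq_card, Fintype.card_subtype_compl, Fintype.card_fin]
    exact Nat.sub_lt i.pos one_pos
  obtain ⟨x, hx, hx0⟩ := Submodule.exists_mem_ne_zero_of_ne_bot
    (LinearMap.ker_ne_bot_of_finrank_lt (f := R.mulVecLin) hrank)
  have hRx (j : Fin n) (hj : j ≠ i) : (R *ᵥ x) ⟨j, hj⟩ = 0 := congrFun (LinearMap.mem_ker.mp hx) _
  refine ⟨x, hx0, fun j hj => ?_, fun j hj => ?_⟩
  · simpa [R, mulVec, hj.not_gt] using hRx j hj.ne'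
  · simpa [R, mulVec, hj] using hRx j hj.ne

namespace IsSpectralDecomp

variable {n : ℕ} {M N V W : Matrix (Fin n) (Fin n) ℝ} {γ ν : Fin n → ℝ}

lemma transpose_eq (h : IsSpectralDecomp M V γ) : Mᵀ = M := by
  rw [h.2.2]
  simp [transpose_mul, Matrix.mul_assoc]

lemma mul_self (h : IsSpectralDecomp M V γ) (hγ : ∀ j, 0 ≤ γ j) :
    IsSpectralDecomp (M * M) V (fun j => γ j ^ 2) := by
  obtain ⟨hV, hanti, rfl⟩ := h
  refine ⟨hV, fun a b hab => pow_le_pow_left₀ (hγ b) (hanti hab) 2, ?_⟩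
  calc V * diagonal γ * Vᵀ * (V * diagonal γ * Vᵀ)
      = V * (diagonal γ * (Vᵀ * V) * diagonal γ) * Vᵀ := by simp only [Matrix.mul_assoc]
    _ = V * diagonal (fun j => γ j ^ 2) * Vᵀ := by
      simp only [hV, Matrix.mul_one, diagonal_mul_diagonal, sq]

lemma transpose_mulVec_dotProduct_self (h : IsSpectralDecomp M V γ) (x : Fin n → ℝ) :
    (Vᵀ *ᵥ x) ⬝ᵥ (Vᵀ *ᵥ x) = x ⬝ᵥ x := by
  rw [← dotProduct_transpose_mul_mulVec, transpose_transpose, mul_eq_one_comm.mp h.1, one_mulVec]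

lemma dotProduct_mulVec_eq_sum (h : IsSpectralDecomp M V γ) (x : Fin n → ℝ) :
    x ⬝ᵥ M *ᵥ x = ∑ j, γ j * ((Vᵀ *ᵥ x) j * (Vᵀ *ᵥ x) j) := by
  rw [h.2.2, dotProduct_mul_mul_transpose_mulVec]
  simp only [dotProduct, mulVec_diagonal]
  exact Finset.sum_congr rfl fun j _ => by ring

lemma mul_dotProduct_self_le (h : IsSpectralDecomp M V γ) {i : Fin n} {x : Fin n → ℝ}
    (hx : ∀ j, i < j → (Vᵀ *ᵥ x) j = 0) : γ i * (x ⬝ᵥ x) ≤ x ⬝ᵥ M *ᵥ x := by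
  rw [h.dotProduct_mulVec_eq_sum, ← h.transpose_mulVec_dotProduct_self, dotProduct, Finset.mul_sum]
  refine Finset.sum_le_sum fun j _ => ?_
  rcases le_or_gt j i with hji | hij
  · exact mul_le_mul_of_nonneg_right (h.2.1 hji) (mul_self_nonneg _)
  · simp [hx j hij]

lemma dotProduct_mulVec_le_mul (h : IsSpectralDecomp M V γ) {i : Fin n} {x : Fin n → ℝ}
    (hx : ∀ j, j < i → (Vᵀ *ᵥ x) j = 0) : x ⬝ᵥ M *ᵥ x ≤ γ i * (x ⬝ᵥ x) := by
  rw [h.dotProduct_mulVec_eq_sum, ← h.transpose_mulVec_dotProduct_self, dotProduct, Finset.mul_sum]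
  refine Finset.sum_le_sum fun j _ => ?_
  rcases le_or_gt i j with hij | hji
  · exact mul_le_mul_of_nonneg_right (h.2.1 hij) (mul_self_nonneg _)
  · simp [hx j hji]

theorem le_of_forall_dotProduct_mulVec_le (hM : IsSpectralDecomp M V γ)
    (hN : IsSpectralDecomp N W ν) (h : ∀ x, x ⬝ᵥ M *ᵥ x ≤ x ⬝ᵥ N *ᵥ x) (i : Fin n) :
    γ i ≤ ν i := by
  -- Test the two quadratic forms on a vector of `span {vⱼ | j ≤ i} ⊓ span {wⱼ | i ≤ j}`.
  obtain ⟨x, hx0, hV, hW⟩ := exists_ne_zero_forall_mulVec_apply_eq_zero Vᵀ Wᵀ i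
  have hxx : 0 < x ⬝ᵥ x :=
    lt_of_le_of_ne (Finset.sum_nonneg fun j _ => mul_self_nonneg _)
      (Ne.symm (dotProduct_self_eq_zero.not.mpr hx0))
  exact le_of_mul_le_mul_right
    ((hM.mul_dotProduct_self_le hV).trans ((h x).trans (hN.dotProduct_mulVec_le_mul hW))) hxx

lemma nonneg_of_forall_dotProduct_mulVec_nonneg (h : IsSpectralDecomp M V γ)
    (hM : ∀ x, 0 ≤ x ⬝ᵥ M *ᵥ x) (i : Fin n) : 0 ≤ γ i := by
  have hzero : IsSpectralDecomp 0 V 0 := ⟨h.1, antitone_const, by simp⟩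
  exact hzero.le_of_forall_dotProduct_mulVec_le h (by simpa using hM) i

end IsSpectralDecomp

lemma Matrix.IsHermitian.exists_isSpectralDecomp_eigsDesc {n : ℕ} {M : Matrix (Fin n) (Fin n) ℝ}
    (hM : M.IsHermitian) : ∃ V, IsSpectralDecomp M V (eigsDesc hM) := by
  set U : Matrix (Fin n) (Fin n) ℝ := (hM.eigenvectorUnitary : Matrix (Fin n) (Fin n) ℝ)
  have hU : Uᵀ * U = 1 := by
    simpa [star_eq_conjTranspose, conjTranspose_eq_transpose_of_trivial] using
      mem_unitaryGroup_iff'.mp hM.eigenvectorUnitary.2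
  have hMU : M = U * diagonal hM.eigenvalues * Uᵀ := by
    simpa [Unitary.conjStarAlgAut_apply, star_eq_conjTranspose,
      conjTranspose_eq_transpose_of_trivial] using hM.spectral_theorem
  let e : Fin n ≃ Fin n := Fin.revPerm.trans (Tuple.sort hM.eigenvalues)
  have hdiag : diagonal (eigsDesc hM) = (diagonal hM.eigenvalues).submatrix e e :=
    (submatrix_diagonal_equiv _ e).symm
  refine ⟨U.submatrix id e, ?_, fun a b hab => Tuple.monotone_sort _ (Fin.rev_le_rev.mpr hab), ?_⟩
  · rw [transpose_submatrix, ← submatrix_mul _ _ _ _ _ Function.bijective_id, hU,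
      submatrix_one_equiv]
  · rw [hdiag, transpose_submatrix, submatrix_mul_equiv, submatrix_mul_equiv, ← hMU]
    rfl

lemma svDesc_le_of_forall_mulVec_dotProduct_le {m n : ℕ} {B : Matrix (Fin m) (Fin n) ℝ}
    {N W : Matrix (Fin n) (Fin n) ℝ} {ν : Fin n → ℝ} (hN : IsSpectralDecomp N W ν)
    (hν : ∀ j, 0 ≤ ν j) (h : ∀ x, (B *ᵥ x) ⬝ᵥ (B *ᵥ x) ≤ (N *ᵥ x) ⬝ᵥ (N *ᵥ x)) (i : Fin n) :
    svDesc B i ≤ ν i := by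
  obtain ⟨V, hV⟩ := (isHermitian_conjTranspose_mul_self B).exists_isSpectralDecomp_eigsDesc
  have hgram : eigsDesc (isHermitian_conjTranspose_mul_self B) i ≤ ν i ^ 2 := by
    refine hV.le_of_forall_dotProduct_mulVec_le (hN.mul_self hν) (fun x => ?_) i
    calc x ⬝ᵥ (Bᴴ * B) *ᵥ x = (B *ᵥ x) ⬝ᵥ (B *ᵥ x) := by
          rw [conjTranspose_eq_transpose_of_trivial, dotProduct_transpose_mul_mulVec]
      _ ≤ (N *ᵥ x) ⬝ᵥ (N *ᵥ x) := h x
      _ = x ⬝ᵥ (N * N) *ᵥ x := by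
          rw [← dotProduct_transpose_mul_mulVec, hN.transpose_eq]
  calc svDesc B i = √(eigsDesc (isHermitian_conjTranspose_mul_self B) i) := rfl
    _ ≤ √(ν i ^ 2) := Real.sqrt_le_sqrt hgram
    _ = ν i := Real.sqrt_sq (hν i)

namespace Matrix.PosSemidef

variable {n : Type*} [Fintype n] [DecidableEq n] {A : Matrix n n ℝ}

lemma transpose_sqrt (hA : A.PosSemidef) : hA.sqrtᵀ = hA.sqrt := by
  simp [Matrix.PosSemidef.sqrt, transpose_mul, star_eq_conjTranspose,
    conjTranspose_eq_transpose_of_trivial, Matrix.mul_assoc]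

lemma sqrt_mul_self (hA : A.PosSemidef) : hA.sqrt * hA.sqrt = A := by
  set U : Matrix n n ℝ := (hA.1.eigenvectorUnitary : Matrix n n ℝ)
  have hU : star U * U = 1 := mem_unitaryGroup_iff'.mp hA.1.eigenvectorUnitary.2
  set D : Matrix n n ℝ := diagonal ((↑) ∘ (Real.sqrt ∘ hA.1.eigenvalues))
  have hD : D * D = diagonal (RCLike.ofReal ∘ hA.1.eigenvalues) := by
    simp [D, diagonal_mul_diagonal, Real.mul_self_sqrt (hA.eigenvalues_nonneg _)]
  calc hA.sqrt * hA.sqrt = U * D * (star U * U) * D * star U := by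
        simp only [Matrix.PosSemidef.sqrt, U, D, Matrix.mul_assoc]
    _ = A := by
      rw [hU, Matrix.mul_one, Matrix.mul_assoc U, hD]
      conv_rhs => rw [hA.1.spectral_theorem, Unitary.conjStarAlgAut_apply]

end Matrix.PosSemidef

theorem nystrom_eigenvalue_guarantee_general
    (n l k : ℕ)
    (A U : Matrix (Fin n) (Fin n) ℝ) (μ : Fin n → ℝ)
    (hA : A.PosSemidef) (hdecA : IsSpectralDecomp A U μ)
    (Q : Matrix (Fin n) (Fin l) ℝ) (hQ : Qᵀ * Q = 1)
    (eps : Fin n → ℝ)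
    (hsv : ∀ i : Fin n, (i : ℕ) < k →
      μ i - eps i ≤ svDesc (Qᵀ * A) i ∧ svDesc (Qᵀ * A) i ≤ μ i)
    (P Ahat : Matrix (Fin n) (Fin n) ℝ)
    (hP : IsOrthProjOnto P (hA.sqrt * Q))
    (hAhat : Ahat = hA.sqrt * P * hA.sqrt) :
    ∀ (W : Matrix (Fin n) (Fin n) ℝ) (ν : Fin n → ℝ), IsSpectralDecomp Ahat W ν →
      ∀ i : Fin n, (i : ℕ) < k → μ i - eps i ≤ ν i ∧ ν i ≤ μ i := by
  intro W ν hdec i hi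
  subst hAhat
  have hS : hA.sqrt.IsSymm := hA.transpose_sqrt
  have hSS : hA.sqrt * hA.sqrt = A := hA.sqrt_mul_self
  have hPs : P.IsSymm := hP.1
  have hPi : IsIdempotentElem P := hP.2.1
  have hν : ∀ j, 0 ≤ ν j :=
    hdec.nonneg_of_forall_dotProduct_mulVec_nonneg (dotProduct_mul_mul_mulVec_nonneg hS hPs hPi)
  have hupper : ν i ≤ μ i := hdec.le_of_forall_dotProduct_mulVec_le hdecA
    (fun x => by simpa only [hSS] using dotProduct_mul_mul_mulVec_le hS hPs hPi x) i
  have hQA : Qᵀ * A = Qᵀ * (hA.sqrt * P * hA.sqrt) := by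
    rw [hP.transpose_mul_mul_mul_eq hS, hSS]
  have hlower : svDesc (Qᵀ * A) i ≤ ν i :=
    svDesc_le_of_forall_mulVec_dotProduct_le hdec hν (fun x => by
      rw [hQA, ← mulVec_mulVec]
      exact transpose_mulVec_dotProduct_self_le hQ _) i
  exact ⟨(hsv i hi).1.trans hlower, hupper⟩

/-- Eigenvalue guarantees transfer from `QᵀA` to the Nyström approximation:
if `λᵢ − εᵢ ≤ σᵢ(QᵀA) ≤ λᵢ` for `i = 1,…,k`, then the `i`-th largest eigenvalue `λ̂ᵢ` of the
Nyström approximation `Â = A^{1/2} P A^{1/2}` (with `P` the orthogonal projection onto the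
column space of `A^{1/2}Q`) satisfies `λᵢ − εᵢ ≤ λ̂ᵢ ≤ λᵢ` for `i = 1,…,k`. -/
theorem nystrom_eigenvalue_guarantee
    (n l k : ℕ) (hk : 1 ≤ k) (hkl : k ≤ l)
    (A U : Matrix (Fin n) (Fin n) ℝ) (μ : Fin n → ℝ)
    (hA : A.PosSemidef) (hdecA : IsSpectralDecomp A U μ)
    (Q : Matrix (Fin n) (Fin l) ℝ) (hQ : Qᵀ * Q = 1)
    (eps : Fin n → ℝ) (hepsnn : ∀ i : Fin n, (i : ℕ) < k → 0 ≤ eps i)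
    (hsv : ∀ i : Fin n, (i : ℕ) < k →
      μ i - eps i ≤ svDesc (Qᵀ * A) i ∧ svDesc (Qᵀ * A) i ≤ μ i)
    (P Ahat : Matrix (Fin n) (Fin n) ℝ)
    (hP : IsOrthProjOnto P (hA.sqrt * Q))
    (hAhat : Ahat = hA.sqrt * P * hA.sqrt) :
    ∀ (W : Matrix (Fin n) (Fin n) ℝ) (ν : Fin n → ℝ), IsSpectralDecomp Ahat W ν →
      ∀ i : Fin n, (i : ℕ) < k → μ i - eps i ≤ ν i ∧ ν i ≤ μ i :=
  nystrom_eigenvalue_guarantee_general n l k A U μ hA hdecA Q hQ eps hsv P Ahat hP hAhat
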